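/- arXiv:2008.08632 — 8 statements merged into one kernel-verified Lean document; each statement's English description precedes it below -/
import Mathlib

section
/- Let n ≥ 1 and let z₁,…,zₙ be real numbers, all ≠ 1, with at least one zᵢ equal to −1. Set aᵢ = a(zᵢ) = 1 + 2zᵢ/(zᵢ−1)², let σₖ be the k-th elementary symmetric polynomial of a₁,…,aₙ (σ₀ = 1), and let ρₖ = σₖ / C(n,k). If for every k with 0 ≤ k ≤ ⌊n/2⌋ the 2k-th finite difference Δ^{2k}ρ_{n−2k} = Σ_{j=n−2k}^{n} C(2k, n−j)(−1)^{n−j} ρⱼ is nonnegative, then T(φ) ≤ 1 for every real φ. -/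
/-- `ψ_{z₀}(z) = |z - z₀|² / |1 - z₀|²`. -/
noncomputable def psi (z₀ z : ℂ) : ℝ :=
  ‖z - z₀‖ ^ 2 / ‖1 - z₀‖ ^ 2

/-- `T(φ) = ∏ᵢ ψ_{zᵢ}(e^{iφ}) + ∏ᵢ ψ_{zᵢ}(-e^{iφ})` for real roots `zᵢ`. -/
noncomputable def T {n : ℕ} (z : Fin n → ℝ) (φ : ℝ) : ℝ :=
  (∏ i, psi (z i) (Complex.exp (φ * Complex.I))) +
    (∏ i, psi (z i) (-Complex.exp (φ * Complex.I)))

/-!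
Writing `c = cos φ` and `aᵢ = a(zᵢ)`, every factor of `T` is affine in `c`:
`ψ_{zᵢ}(±e^{iφ}) = aᵢ(1 ∓ c) ± c`. Hence `T(φ) = Q(c) + Q(-c)` for the polynomial
`Q(x) = ∏ᵢ (aᵢ(1 + x) - x)`. Expanding `Q` in the elementary symmetric functions and regrouping by
powers of `x`, the coefficient of `x^m` is `C(n,m) Δ^m ρ_{n-m}`, so the even part `Q(x) + Q(-x)`
has nonnegative coefficients and is maximal on `[-1, 1]` at `x = ±1`. Finally `Q(-1) = 1`, and
`Q(1) = ∏ᵢ (2aᵢ - 1) = 0` because `a(-1) = 1/2`.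
-/

open Finset

theorem Finset.prod_mul_add_eq_sum_powersetCard {ι R : Type*} [CommSemiring R] (s : Finset ι)
    (f : ι → R) (x y : R) :
    ∏ i ∈ s, (f i * x + y) =
      ∑ j ∈ range (#s + 1), (∑ t ∈ powersetCard j s, ∏ i ∈ t, f i) * x ^ j * y ^ (#s - j) := by
  classical
  rw [prod_add, sum_powerset]
  refine sum_congr rfl fun j _ => ?_
  rw [sum_mul, sum_mul]
  refine sum_congr rfl fun t ht => ?_
  rw [mem_powersetCard] at ht
  rw [prod_mul_distrib, prod_const, prod_const, card_sdiff_of_subset ht.1, ht.2]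

theorem Nat.sum_range_choose_mul_choose_mul_pow {R : Type*} [CommSemiring R] (n k : ℕ) (x : R) :
    ∑ m ∈ range (n + 1), (n.choose m * m.choose k : R) * x ^ m =
      n.choose k * x ^ k * (1 + x) ^ (n - k) := by
  have hlow : ∀ m < k, (n.choose m * m.choose k : R) * x ^ m = 0 := fun m hm => by
    simp [Nat.choose_eq_zero_of_lt hm]
  rcases lt_or_ge n k with hnk | hkn
  · rw [Nat.choose_eq_zero_of_lt hnk, Nat.cast_zero, zero_mul, zero_mul]
    exact sum_eq_zero fun m hm => hlow m (by grind)
  obtain ⟨l, rfl⟩ := Nat.exists_eq_add_of_le hkn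
  rw [add_assoc, sum_range_add, sum_eq_zero fun m hm => hlow m (mem_range.mp hm), zero_add,
    Nat.add_sub_cancel_left, add_comm 1 x, add_pow, mul_sum]
  refine sum_congr rfl fun i _ => ?_
  have h := Nat.choose_mul (n := k + l) (k := k + i) (s := k) (Nat.le_add_right k i)
  rw [Nat.add_sub_cancel_left, Nat.add_sub_cancel_left] at h
  rw [← Nat.cast_mul, h, pow_add, one_pow]
  push_cast
  ring

theorem psi_eq_of_norm_eq_one {r : ℝ} (hr : r ≠ 1) {w : ℂ} (hw : ‖w‖ = 1) :
    psi r w = (1 + 2 * r / (r - 1) ^ 2) * (1 - w.re) + w.re := by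
  have hw' : w.re ^ 2 + w.im ^ 2 = 1 := by
    rw [← one_pow 2, ← hw, Complex.sq_norm, Complex.normSq_apply]; ring
  have hnum : ‖w - r‖ ^ 2 = 1 - 2 * r * w.re + r ^ 2 := by
    rw [Complex.sq_norm, Complex.normSq_apply]
    simp only [Complex.sub_re, Complex.ofReal_re, Complex.sub_im, Complex.ofReal_im, sub_zero]
    linear_combination hw'
  have hden : ‖1 - (r : ℂ)‖ ^ 2 = (r - 1) ^ 2 := by
    rw [← Complex.ofReal_one, ← Complex.ofReal_sub, Complex.norm_real, Real.norm_eq_abs, sq_abs]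
    ring
  have hr' : r - 1 ≠ 0 := sub_ne_zero.mpr hr
  rw [psi, hnum, hden]
  field_simp
  ring

theorem sum_mul_pow_add_sum_mul_neg_pow_le {R : Type*} [Ring R] [LinearOrder R]
    [IsStrictOrderedRing R] {s : Finset ℕ} {b : ℕ → R} (hb : ∀ m ∈ s, Even m → 0 ≤ b m) {x : R}
    (hx : |x| ≤ 1) :
    ∑ m ∈ s, b m * x ^ m + ∑ m ∈ s, b m * (-x) ^ m ≤
      ∑ m ∈ s, b m * 1 ^ m + ∑ m ∈ s, b m * (-1) ^ m := by
  rw [← sum_add_distrib, ← sum_add_distrib]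
  refine sum_le_sum fun m hm => ?_
  rcases Nat.even_or_odd m with he | ho
  · have hxm : x ^ m ≤ 1 := by
      rw [← he.pow_abs]; exact pow_le_one₀ (abs_nonneg x) hx
    rw [he.neg_pow, he.neg_pow, one_pow, mul_one]
    have hbm := mul_le_mul_of_nonneg_left hxm (hb m hm he)
    rw [mul_one] at hbm
    exact add_le_add hbm hbm
  · rw [ho.neg_pow, ho.neg_pow]
    simp

theorem prod_mul_one_add_sub_eq_sum {ι R : Type*} [CommRing R] (s : Finset ι) (a : ι → R)
    (ρ : ℕ → R) (hρ : ∀ j ≤ #s, ρ j * ((#s).choose j : R) = ∑ t ∈ powersetCard j s, ∏ i ∈ t, a i)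
    (x : R) :
    ∏ i ∈ s, (a i * (1 + x) - x) =
      ∑ m ∈ range (#s + 1), ((#s).choose m : R) *
        (∑ j ∈ Icc (#s - m) #s, (m.choose (#s - j) : R) * (-1) ^ (#s - j) * ρ j) * x ^ m := by
  simp_rw [sub_eq_add_neg _ x]
  rw [prod_mul_add_eq_sum_powersetCard]
  generalize #s = N at hρ ⊢
  have hterm : ∀ j ∈ range (N + 1),
      (∑ t ∈ powersetCard j s, ∏ i ∈ t, a i) * (1 + x) ^ j * (-x) ^ (N - j) =
        ∑ m ∈ range (N + 1), (N.choose m : R) * ((m.choose (N - j) : R) * (-1) ^ (N - j) * ρ j) *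
          x ^ m := by
    intro j hj
    have hjN : j ≤ N := Nat.lt_succ_iff.mp (mem_range.mp hj)
    have hbinom := Nat.sum_range_choose_mul_choose_mul_pow N (N - j) x
    rw [Nat.sub_sub_self hjN, Nat.choose_symm hjN] at hbinom
    calc (∑ t ∈ powersetCard j s, ∏ i ∈ t, a i) * (1 + x) ^ j * (-x) ^ (N - j)
        = ρ j * (-1) ^ (N - j) * ((N.choose j : R) * x ^ (N - j) * (1 + x) ^ j) := by
          rw [← hρ j hjN, neg_pow]; ring
      _ = _ := by
          rw [← hbinom, mul_sum]
          exact sum_congr rfl fun m _ => by ring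
  rw [sum_congr rfl hterm, sum_comm]
  refine sum_congr rfl fun m _ => ?_
  rw [mul_sum, sum_mul]
  refine (sum_subset (fun j hj => mem_range.mpr (Nat.lt_succ_of_le (mem_Icc.mp hj).2))
    fun j hj hjm => ?_).symm
  rw [mem_range] at hj
  rw [mem_Icc] at hjm
  rw [Nat.choose_eq_zero_of_lt (show m < N - j by omega), Nat.cast_zero, zero_mul, zero_mul,
    mul_zero, zero_mul]

theorem stmt_0_general (n : ℕ) (z : Fin n → ℝ)
    (hz : ∀ i, z i ≠ 1) (hroot : ∃ i, z i = -1)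
    (a : Fin n → ℝ) (ha : ∀ i, a i = 1 + 2 * z i / (z i - 1) ^ 2)
    (σ : ℕ → ℝ)
    (hσ : ∀ k, σ k = ∑ S ∈ Finset.powersetCard k (Finset.univ : Finset (Fin n)),
      ∏ i ∈ S, a i)
    (ρ : ℕ → ℝ) (hρ : ∀ k, ρ k = σ k / (n.choose k : ℝ))
    (hΔ : ∀ k ≤ n / 2,
      0 ≤ ∑ j ∈ Finset.Icc (n - 2 * k) n,
        ((2 * k).choose (n - j) : ℝ) * (-1 : ℝ) ^ (n - j) * ρ j) :
    ∀ φ : ℝ, T z φ ≤ 1 := by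
  intro φ
  obtain ⟨i₀, hi₀⟩ := hroot
  set Q : ℝ → ℝ := fun x => ∏ i, (a i * (1 + x) - x) with hQ
  have hpsi (i : Fin n) (w : ℂ) (hw : ‖w‖ = 1) : psi (z i) w = a i * (1 + -w.re) - -w.re := by
    rw [psi_eq_of_norm_eq_one (hz i) hw, ha i]; ring
  have hρσ : ∀ j ≤ #(univ : Finset (Fin n)), ρ j * ((#(univ : Finset (Fin n))).choose j : ℝ) =
      ∑ t ∈ powersetCard j univ, ∏ i ∈ t, a i := fun j hj => by
    rw [card_fin] at hj ⊢
    rw [hρ, hσ, div_mul_cancel₀ _ (Nat.cast_ne_zero.mpr (Nat.choose_pos hj).ne')]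
  have hexp := prod_mul_one_add_sub_eq_sum univ a ρ hρσ
  simp only [card_fin] at hexp
  have hQ1 : Q 1 = 0 := prod_eq_zero (mem_univ i₀) (by rw [ha, hi₀]; norm_num)
  have hQneg1 : Q (-1) = 1 := prod_eq_one fun i _ => by ring
  calc T z φ = Q (Real.cos φ) + Q (-Real.cos φ) := by
        rw [add_comm, T]
        congr 1 <;> refine prod_congr rfl fun i _ => ?_
        · rw [hpsi i _ (by simp), Complex.exp_ofReal_mul_I_re]
        · rw [hpsi i _ (by simp), Complex.neg_re, Complex.exp_ofReal_mul_I_re, neg_neg]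
    _ ≤ Q 1 + Q (-1) := by
      simp only [hQ, hexp]
      refine sum_mul_pow_add_sum_mul_neg_pow_le (fun m _ ⟨k, hk⟩ => ?_) (Real.abs_cos_le_one φ)
      rw [← two_mul] at hk
      subst hk
      rcases le_or_gt (2 * k) n with h2k | h2k
      · exact mul_nonneg (Nat.cast_nonneg _) (hΔ k (by omega))
      · rw [Nat.choose_eq_zero_of_lt h2k, Nat.cast_zero, zero_mul]
    _ = 1 := by rw [hQ1, hQneg1, zero_add]

theorem stmt_0 (n : ℕ) (hn : 1 ≤ n) (z : Fin n → ℝ)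
    (hz : ∀ i, z i ≠ 1) (hroot : ∃ i, z i = -1)
    (a : Fin n → ℝ) (ha : ∀ i, a i = 1 + 2 * z i / (z i - 1) ^ 2)
    (σ : ℕ → ℝ)
    (hσ : ∀ k, σ k = ∑ S ∈ Finset.powersetCard k (Finset.univ : Finset (Fin n)),
      ∏ i ∈ S, a i)
    (ρ : ℕ → ℝ) (hρ : ∀ k, ρ k = σ k / (n.choose k : ℝ))
    (hΔ : ∀ k ≤ n / 2,
      0 ≤ ∑ j ∈ Finset.Icc (n - 2 * k) n,
        ((2 * k).choose (n - j) : ℝ) * (-1 : ℝ) ^ (n - j) * ρ j) :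
    ∀ φ : ℝ, T z φ ≤ 1 :=
  stmt_0_general n z hz hroot a ha σ hσ ρ hρ hΔ
end

section
/- Let n ≥ 1 and let z₁,…,zₙ be real numbers with zᵢ ≤ 0 for every i and with at least one zᵢ equal to −1. Then T(φ) ≤ 1 for every real φ. -/
/-!
On the unit circle `|w - x|² = 1 - 2x Re w + x²`. For `x ≤ 0` this is at most `(1 - x)²`, so every
factor `ψ_x(±w)` lies in `[0, 1]` and each product in `T` is bounded by its factor at a root
`z_j = -1`. For that root the two factors add up to `(|w + 1|² + |w - 1|²) / 4 = 1` by the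
parallelogram law.
-/

lemma norm_sub_ofReal_sq (w : ℂ) (x : ℝ) :
    ‖w - x‖ ^ 2 = ‖w‖ ^ 2 - 2 * x * w.re + x ^ 2 := by
  simp only [Complex.sq_norm, Complex.normSq_apply, Complex.sub_re, Complex.sub_im,
    Complex.ofReal_re, Complex.ofReal_im]
  ring

lemma psi_nonneg (z₀ w : ℂ) : 0 ≤ psi z₀ w := by
  unfold psi; positivity

lemma psi_le_one {x : ℝ} (hx : x ≤ 0) {w : ℂ} (hw : ‖w‖ = 1) : psi x w ≤ 1 := by
  have hden : ‖(1 : ℂ) - x‖ ^ 2 = (1 - x) ^ 2 := by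
    rw [norm_sub_ofReal_sq]; simp only [norm_one, Complex.one_re]; ring
  have hre : w.re ≤ 1 := hw ▸ Complex.re_le_norm w
  rw [psi, hden, div_le_one (by nlinarith), norm_sub_ofReal_sq, hw]
  nlinarith

lemma psi_neg_one_add_psi_neg_one_neg {w : ℂ} (hw : ‖w‖ = 1) :
    psi ((-1 : ℝ) : ℂ) w + psi ((-1 : ℝ) : ℂ) (-w) = 1 := by
  have hden : ‖(1 : ℂ) - ((-1 : ℝ) : ℂ)‖ ^ 2 = 4 := by
    rw [norm_sub_ofReal_sq]; norm_num
  rw [psi, psi, hden, norm_sub_ofReal_sq, norm_sub_ofReal_sq, norm_neg, hw, Complex.neg_re]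
  ring

lemma prod_psi_le_psi {n : ℕ} {z : Fin n → ℝ} (hz : ∀ i, z i ≤ 0) {w : ℂ} (hw : ‖w‖ = 1)
    (j : Fin n) : ∏ i, psi (z i) w ≤ psi (z j) w := by
  simpa using Finset.prod_le_prod_of_subset_of_le_one (Finset.subset_univ {j})
    (fun i _ => psi_nonneg _ _) (fun i _ _ => psi_le_one (hz i) hw)

theorem stmt_2_general (n : ℕ) (z : Fin n → ℝ)
    (hz : ∀ i, z i ≤ 0) (hroot : ∃ i, z i = -1) :
    ∀ φ : ℝ, T z φ ≤ 1 := by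
  intro φ
  obtain ⟨j, hj⟩ := hroot
  have hw : ‖Complex.exp (φ * Complex.I)‖ = 1 := Complex.norm_exp_ofReal_mul_I φ
  have hsum := psi_neg_one_add_psi_neg_one_neg hw
  rw [← hj] at hsum
  have hplus := prod_psi_le_psi hz hw j
  have hminus := prod_psi_le_psi hz (by rwa [norm_neg]) j
  rw [T]
  linarith

theorem stmt_2 (n : ℕ) (hn : 1 ≤ n) (z : Fin n → ℝ)
    (hz : ∀ i, z i ≤ 0) (hroot : ∃ i, z i = -1) :
    ∀ φ : ℝ, T z φ ≤ 1 :=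
  stmt_2_general n z hz hroot
end

section
/- Let n ≥ 1 and let z₁,…,zₙ be real numbers with zᵢ ≤ 0 for every i and with at least one zᵢ equal to −1, and let P(z) = ∏_{i=1}^n (z − zᵢ)/(1 − zᵢ) (so P(1) = 1). Then |P(z)|² + |P(−z)|² ≤ 1 for every complex z with |z| = 1. -/
/-! Every factor `(w - zᵢ)/(1 - zᵢ)` has modulus at most `1` on the closed unit disc, while the
factor with `zᵢ = -1` is `(w + 1)/2`. Hence on the unit circle `|P(w)|² ≤ |(w + 1)/2|² = (1 + Re w)/2`
and likewise `|P(-w)|² ≤ (1 - Re w)/2`; the two bounds add up to `1`. -/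

open Finset

theorem Finset.norm_prod_le_norm_of_norm_le_one {ι R : Type*} [NormedCommRing R]
    [NormOneClass R] {s : Finset ι} {f : ι → R} {j : ι} (hj : j ∈ s)
    (hf : ∀ i ∈ s, ‖f i‖ ≤ 1) : ‖∏ i ∈ s, f i‖ ≤ ‖f j‖ := by
  classical
  rw [← mul_prod_erase s f hj]
  have hrest : ‖∏ i ∈ s.erase j, f i‖ ≤ 1 :=
    (norm_prod_le _ f).trans <|
      prod_le_one (fun _ _ ↦ norm_nonneg _) fun i hi ↦ hf i (mem_of_mem_erase hi)
  calc ‖f j * ∏ i ∈ s.erase j, f i‖ ≤ ‖f j‖ * ‖∏ i ∈ s.erase j, f i‖ := norm_mul_le _ _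
    _ ≤ ‖f j‖ := mul_le_of_le_one_right (norm_nonneg _) hrest

theorem Complex.norm_sub_ofReal_div_le_one {w : ℂ} (hw : ‖w‖ ≤ 1) {t : ℝ} (ht : t ≤ 0) :
    ‖(w - t) / (1 - t)‖ ≤ 1 := by
  have hden : (1 - t : ℂ) = ((1 - t : ℝ) : ℂ) := by push_cast; ring
  rw [norm_div, hden, norm_real, Real.norm_of_nonneg (by linarith),
    div_le_one (by linarith)]
  calc ‖w - t‖ ≤ ‖w‖ + ‖(t : ℂ)‖ := norm_sub_le _ _
    _ ≤ 1 - t := by rw [norm_real, Real.norm_of_nonpos ht]; linarith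

theorem Complex.sq_norm_add_one_div_two {w : ℂ} (hw : ‖w‖ = 1) :
    ‖(w + 1) / 2‖ ^ 2 = (1 + w.re) / 2 := by
  have hsq : w.re * w.re + w.im * w.im = 1 := by
    rw [← normSq_apply, ← Complex.sq_norm, hw, one_pow]
  rw [Complex.sq_norm, normSq_apply]
  simp only [div_re, div_im, add_re, add_im, one_re, one_im, normSq_ofNat, re_ofNat, im_ofNat]
  linear_combination hsq / 4

theorem sq_norm_prod_le_of_root_neg_one {ι : Type*} [Fintype ι] {z : ι → ℝ}
    (hz : ∀ i, z i ≤ 0) {j : ι} (hj : z j = -1) {w : ℂ} (hw : ‖w‖ = 1) :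
    ‖∏ i, (w - (z i : ℂ)) / (1 - (z i : ℂ))‖ ^ 2 ≤ (1 + w.re) / 2 := by
  have hfactor : (w - (z j : ℂ)) / (1 - (z j : ℂ)) = (w + 1) / 2 := by
    rw [hj]; push_cast; ring_nf
  rw [← Complex.sq_norm_add_one_div_two hw, ← hfactor]
  gcongr
  exact norm_prod_le_norm_of_norm_le_one (mem_univ j)
    fun i _ ↦ Complex.norm_sub_ofReal_div_le_one hw.le (hz i)

theorem stmt_3_general (n : ℕ) (z : Fin n → ℝ)
    (hz : ∀ i, z i ≤ 0) (hroot : ∃ i, z i = -1)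
    (P : ℂ → ℂ) (hP : ∀ w : ℂ, P w = ∏ i, (w - (z i : ℂ)) / (1 - (z i : ℂ))) :
    ∀ w : ℂ, ‖w‖ = 1 →
      ‖P w‖ ^ 2 + ‖P (-w)‖ ^ 2 ≤ 1 := by
  intro w hw
  obtain ⟨j, hj⟩ := hroot
  have hpos := sq_norm_prod_le_of_root_neg_one hz hj hw
  have hneg := sq_norm_prod_le_of_root_neg_one hz hj (w := -w) (by rwa [norm_neg])
  rw [Complex.neg_re] at hneg
  rw [hP, hP]
  linarith

theorem stmt_3 (n : ℕ) (hn : 1 ≤ n) (z : Fin n → ℝ)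
    (hz : ∀ i, z i ≤ 0) (hroot : ∃ i, z i = -1)
    (P : ℂ → ℂ) (hP : ∀ w : ℂ, P w = ∏ i, (w - (z i : ℂ)) / (1 - (z i : ℂ))) :
    ∀ w : ℂ, ‖w‖ = 1 →
      ‖P w‖ ^ 2 + ‖P (-w)‖ ^ 2 ≤ 1 :=
  stmt_3_general n z hz hroot P hP
end

section
/- Let z₂ be a complex number with z₂ ≠ 1, and let P(z) = ((z + 1)/2) · ((z − z₂)/(1 − z₂)), the degree-2 polynomial with P(1) = 1 whose roots are −1 and z₂. Then |P(z)|² + |P(−z)|² ≤ 1 holds for every complex z with |z| = 1 if and only if z₂ is real and z₂ ≤ 0. -/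
/-!
For `‖w‖ = 1` one has
`|w + 1|²|w - z|² + |w - 1|²|w + z|² = 4|1 - z|² - 8 Im w · Im (z w̄)`,
so the inequality says exactly that the real quadratic form `Im w · Im (z w̄)` is nonnegative
on the unit circle, hence on all of `ℂ`. At `w = i` it equals `-Re z`, and at `w = s + i` it
equals `s Im z - Re z`, which is nonnegative for every real `s` only when `Im z = 0`.
-/

open Complex ComplexConjugate

lemma normSq_mul_add_normSq_mul_neg (z w : ℂ) (hw : ‖w‖ = 1) :
    normSq ((w + 1) * (w - z)) + normSq ((-w + 1) * (-w - z)) =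
      4 * normSq (1 - z) - 8 * (w.im * (z * conj w).im) := by
  have hw' : w.re * w.re + w.im * w.im = 1 := by
    rw [← normSq_apply, ← Complex.sq_norm, hw, one_pow]
  rw [normSq_mul, normSq_mul]
  simp only [normSq_apply, add_re, add_im, sub_re, sub_im, neg_re, neg_im,
    mul_im, conj_re, conj_im, one_re, one_im]
  linear_combination
    (2 * (w.re * w.re + w.im * w.im + 2 + z.re * z.re + z.im * z.im) - 8 * z.re) * hw'

lemma norm_sq_add_norm_sq_neg_le_one_iff (z w : ℂ) (hz : z ≠ 1) (hw : ‖w‖ = 1) :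
    ‖(w + 1) / 2 * ((w - z) / (1 - z))‖ ^ 2 + ‖(-w + 1) / 2 * ((-w - z) / (1 - z))‖ ^ 2 ≤ 1 ↔
      0 ≤ w.im * (z * conj w).im := by
  have hd : 0 < 4 * normSq (1 - z) := by
    have := normSq_pos.mpr (sub_ne_zero.mpr hz.symm)
    positivity
  have hsplit : ∀ u : ℂ, (u + 1) / 2 * ((u - z) / (1 - z)) = (u + 1) * (u - z) / (2 * (1 - z)) :=
    fun u => by rw [div_mul_div_comm]
  simp only [Complex.sq_norm, hsplit, normSq_div, normSq_mul (2 : ℂ), normSq_ofNat, ← add_div]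
  rw [normSq_mul_add_normSq_mul_neg z w hw]
  rw [show (2 : ℝ) * 2 * normSq (1 - z) = 4 * normSq (1 - z) by ring, div_le_one hd]
  constructor <;> intro h <;> linarith

lemma im_mul_im_mul_conj_nonneg_iff (z : ℂ) :
    (∀ w : ℂ, ‖w‖ = 1 → 0 ≤ w.im * (z * conj w).im) ↔ z.im = 0 ∧ z.re ≤ 0 := by
  constructor
  · intro H
    have hall : ∀ w : ℂ, 0 ≤ w.im * (z * conj w).im := by
      intro w
      rcases eq_or_ne w 0 with rfl | hw0
      · simp
      set r := ‖w‖
      have hr : 0 < r := norm_pos_iff.mpr hw0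
      have hu := H ((r : ℂ)⁻¹ * w) (by simp [r, hr.ne'])
      have hscale : ((r : ℂ)⁻¹ * w).im * (z * conj ((r : ℂ)⁻¹ * w)).im =
          r⁻¹ ^ 2 * (w.im * (z * conj w).im) := by
        rw [← ofReal_inv, map_mul, conj_ofReal, mul_left_comm, im_ofReal_mul, im_ofReal_mul]
        ring
      rw [hscale] at hu
      exact (mul_nonneg_iff_of_pos_left (by positivity)).mp hu
    have hre : z.re ≤ 0 := by simpa using hall I
    refine ⟨?_, hre⟩
    by_contra him
    have := hall ⟨(z.re - 1) / z.im, 1⟩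
    simp only [mul_im, conj_re, conj_im, one_mul] at this
    field_simp at this
    linarith
  · rintro ⟨him, hre⟩ w _
    have : (z * conj w).im = -(z.re * w.im) := by simp [him]
    rw [this]
    nlinarith [sq_nonneg w.im]

theorem stmt_4 (z₂ : ℂ) (hz₂ : z₂ ≠ 1)
    (P : ℂ → ℂ) (hP : ∀ w : ℂ, P w = ((w + 1) / 2) * ((w - z₂) / (1 - z₂))) :
    (∀ w : ℂ, ‖w‖ = 1 →
        ‖P w‖ ^ 2 + ‖P (-w)‖ ^ 2 ≤ 1) ↔
      (z₂.im = 0 ∧ z₂.re ≤ 0) := by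
  rw [← im_mul_im_mul_conj_nonneg_iff]
  refine forall₂_congr fun w hw => ?_
  rw [hP, hP]
  exact norm_sq_add_norm_sq_neg_le_one_iff z₂ w hz₂ hw
end

section
/- Let z₁, z₂ be complex numbers, both ≠ 1, and let P(z) = ((z + 1)/2) · ((z − z₁)/(1 − z₁)) · ((z − z₂)/(1 − z₂)), the degree-3 polynomial with P(1) = 1 whose roots are −1, z₁, z₂. Writing zᵢ = xᵢ + i·yᵢ, set Aᵢ = F₁(xᵢ, yᵢ) and Bᵢ = F₃(xᵢ, yᵢ). Then |P(z)|² + |P(−z)|² ≤ 1 holds for every complex z with |z| = 1 if and only if B₁ + B₂ = 0 and 1 − A₁A₂ − B₁B₂ ≥ 0. -/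
/-- `F₁(x,y) = 1 + 2x/((x−1)² + y²)`. -/
noncomputable def F₁ (x y : ℝ) : ℝ := 1 + 2 * x / ((x - 1) ^ 2 + y ^ 2)

/-- `F₃(x,y) = −2y/((x−1)² + y²)`. -/
noncomputable def F₃ (x y : ℝ) : ℝ := -(2 * y) / ((x - 1) ^ 2 + y ^ 2)

/-!
On the unit circle `|(w + 1)/2|² = (1 + Re w)/2` and `|(w − z)/(1 − z)|² = A − Re w (A − 1) + Im w B`
with `A = F₁(z)`, `B = F₃(z)`; multiplying out and using `(Re w)² = 1 − (Im w)²` gives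
`|P(w)|² + |P(−w)|² = 1 + (B₁ + B₂) Re w Im w − (1 − A₁A₂ − B₁B₂) (Im w)²`.
So the inequality says that the quadratic form `(c, s) ↦ (B₁ + B₂) c s − (1 − A₁A₂ − B₁B₂) s²` is
nonpositive on the circle, hence on the whole plane by homogeneity; as it has no `c²` term, this
happens exactly when its `c s` coefficient vanishes and its `s²` coefficient is nonpositive.
-/

open Complex

lemma re_sq_add_im_sq_of_norm_eq_one {w : ℂ} (hw : ‖w‖ = 1) : w.re ^ 2 + w.im ^ 2 = 1 := by
  simpa [normSq_apply, ← sq, hw] using normSq_eq_norm_sq w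

lemma normSq_one_sub (z : ℂ) : normSq (1 - z) = (z.re - 1) ^ 2 + z.im ^ 2 := by
  simp only [normSq_apply, sub_re, sub_im, one_re, one_im]
  ring

lemma normSq_add_one_div_two {w : ℂ} (hw : ‖w‖ = 1) :
    normSq ((w + 1) / 2) = (1 + w.re) / 2 := by
  rw [map_div₀, normSq_add, normSq_eq_norm_sq, hw]
  simp only [map_one, mul_one, normSq_ofNat]
  ring

lemma normSq_sub_div_one_sub {z w : ℂ} (hz : z ≠ 1) (hw : ‖w‖ = 1) :
    normSq ((w - z) / (1 - z)) =
      F₁ z.re z.im - w.re * (F₁ z.re z.im - 1) + w.im * F₃ z.re z.im := by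
  have hd : (z.re - 1) ^ 2 + z.im ^ 2 ≠ 0 := by
    rw [← normSq_one_sub]
    exact normSq_eq_zero.not.2 (sub_ne_zero.2 hz.symm)
  rw [map_div₀, normSq_one_sub, F₁, F₃]
  simp only [normSq_apply, sub_re, sub_im]
  field_simp
  linear_combination re_sq_add_im_sq_of_norm_eq_one hw

lemma half_mul_add_half_mul (A₁ A₂ B₁ B₂ : ℝ) {c s : ℝ} (h : c ^ 2 + s ^ 2 = 1) :
    (1 + c) / 2 * (A₁ - c * (A₁ - 1) + s * B₁) * (A₂ - c * (A₂ - 1) + s * B₂)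
      + (1 - c) / 2 * (A₁ + c * (A₁ - 1) - s * B₁) * (A₂ + c * (A₂ - 1) - s * B₂)
      = 1 + (B₁ + B₂) * c * s - (1 - A₁ * A₂ - B₁ * B₂) * s ^ 2 := by
  linear_combination (1 - A₁ * A₂) * h

lemma quadratic_nonpos_on_unit_circle_iff (β γ : ℝ) :
    (∀ w : ℂ, ‖w‖ = 1 → β * w.re * w.im - γ * w.im ^ 2 ≤ 0) ↔ β = 0 ∧ 0 ≤ γ := by
  constructor
  · intro H
    have hplane : ∀ w : ℂ, β * w.re * w.im - γ * w.im ^ 2 ≤ 0 := by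
      intro w
      rcases eq_or_ne w 0 with rfl | hw
      · simp
      have hr : 0 < ‖w‖ := norm_pos_iff.2 hw
      have hunit := H (w / ‖w‖) (by simp [hr.ne'])
      rw [div_ofReal_re, div_ofReal_im] at hunit
      have hscale : β * (w.re / ‖w‖) * (w.im / ‖w‖) - γ * (w.im / ‖w‖) ^ 2
          = (β * w.re * w.im - γ * w.im ^ 2) / ‖w‖ ^ 2 := by ring
      rwa [hscale, div_le_iff₀ (by positivity), zero_mul] at hunit
    have hγ : 0 ≤ γ := by simpa using hplane I
    refine ⟨?_, hγ⟩
    -- the form takes the value `β ^ 2` at `(γ + 1, β)`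
    have hβ := hplane ⟨γ + 1, β⟩
    dsimp at hβ
    nlinarith [sq_nonneg β]
  · rintro ⟨rfl, hγ⟩ w -
    nlinarith [sq_nonneg w.im]

theorem stmt_5 (z₁ z₂ : ℂ) (hz₁ : z₁ ≠ 1) (hz₂ : z₂ ≠ 1)
    (P : ℂ → ℂ)
    (hP : ∀ w : ℂ,
      P w = ((w + 1) / 2) * ((w - z₁) / (1 - z₁)) * ((w - z₂) / (1 - z₂)))
    (A₁ A₂ B₁ B₂ : ℝ)
    (hA₁ : A₁ = F₁ z₁.re z₁.im) (hA₂ : A₂ = F₁ z₂.re z₂.im)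
    (hB₁ : B₁ = F₃ z₁.re z₁.im) (hB₂ : B₂ = F₃ z₂.re z₂.im) :
    (∀ w : ℂ, ‖w‖ = 1 →
        ‖P w‖ ^ 2 + ‖P (-w)‖ ^ 2 ≤ 1) ↔
      (B₁ + B₂ = 0 ∧ 0 ≤ 1 - A₁ * A₂ - B₁ * B₂) := by
  have hsum : ∀ w : ℂ, ‖w‖ = 1 → ‖P w‖ ^ 2 + ‖P (-w)‖ ^ 2
      = 1 + ((B₁ + B₂) * w.re * w.im - (1 - A₁ * A₂ - B₁ * B₂) * w.im ^ 2) := by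
    intro w hw
    have hw' : ‖-w‖ = 1 := by rw [norm_neg, hw]
    simp only [← normSq_eq_norm_sq, hP, map_mul, normSq_add_one_div_two hw,
      normSq_add_one_div_two hw', normSq_sub_div_one_sub hz₁ hw, normSq_sub_div_one_sub hz₁ hw',
      normSq_sub_div_one_sub hz₂ hw, normSq_sub_div_one_sub hz₂ hw', neg_re, neg_im,
      ← hA₁, ← hA₂, ← hB₁, ← hB₂]
    linear_combination half_mul_add_half_mul A₁ A₂ B₁ B₂ (re_sq_add_im_sq_of_norm_eq_one hw)
  rw [← quadratic_nonpos_on_unit_circle_iff]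
  refine forall₂_congr fun w hw => ?_
  rw [hsum w hw, add_le_iff_nonpos_right]
end

section
/- Let x₁, x₂ be real numbers, both ≠ 1, and let P(z) = ((z + 1)/2) · ((z − x₁)/(1 − x₁)) · ((z − x₂)/(1 − x₂)), the degree-3 polynomial with P(1) = 1 whose roots are −1, x₁, x₂. Then |P(z)|² + |P(−z)|² ≤ 1 holds for every complex z with |z| = 1 if and only if x₁x₂(x₁ + x₂ − 2) + x₁ + x₂ ≤ 0. -/
/-! With `Q w = (w + 1) (w - x₁) (w - x₂)`, on the unit circle `|Q w|² + |Q (-w)|²` equals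
`4 Q(1)² + 8 S (Im w)²`, where `S = x₁x₂(x₁ + x₂ - 2) + x₁ + x₂`. Since `P = Q / Q(1)`, the
inequality holds iff `S (Im w)² ≤ 0` on the circle, i.e. iff `S ≤ 0` (take `w = i`). -/

open Complex

lemma norm_sq_cubic_add_norm_sq_cubic_neg (x₁ x₂ : ℝ) {w : ℂ} (hw : ‖w‖ = 1) :
    ‖(w + 1) * (w - x₁) * (w - x₂)‖ ^ 2 + ‖(-w + 1) * (-w - x₁) * (-w - x₂)‖ ^ 2 =
      4 * ((1 - x₁) * (1 - x₂)) ^ 2 + 8 * (x₁ * x₂ * (x₁ + x₂ - 2) + x₁ + x₂) * w.im ^ 2 := by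
  have him : w.im ^ 2 = 1 - w.re ^ 2 := by
    have := Complex.sq_norm w
    rw [hw, normSq_apply] at this
    linarith
  simp only [norm_mul, mul_pow, Complex.sq_norm, normSq_apply, add_re, add_im, sub_re, sub_im,
    neg_re, neg_im, one_re, one_im, ofReal_re, ofReal_im, add_zero, sub_zero, ← sq, neg_sq, him]
  ring

lemma norm_one_sub_ofReal (x : ℝ) : ‖(1 : ℂ) - x‖ = |1 - x| := by
  rw [← ofReal_one, ← ofReal_sub, norm_real, Real.norm_eq_abs]

lemma forall_norm_eq_one_mul_im_sq_nonpos_iff (c : ℝ) :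
    (∀ w : ℂ, ‖w‖ = 1 → c * w.im ^ 2 ≤ 0) ↔ c ≤ 0 :=
  ⟨fun h => by simpa using h I (by simp),
    fun hc _ _ => mul_nonpos_of_nonpos_of_nonneg hc (sq_nonneg _)⟩

theorem stmt_6 (x₁ x₂ : ℝ) (hx₁ : x₁ ≠ 1) (hx₂ : x₂ ≠ 1)
    (P : ℂ → ℂ)
    (hP : ∀ w : ℂ,
      P w = ((w + 1) / 2) * ((w - (x₁ : ℂ)) / (1 - (x₁ : ℂ))) *
        ((w - (x₂ : ℂ)) / (1 - (x₂ : ℂ)))) :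
    (∀ w : ℂ, ‖w‖ = 1 →
        ‖P w‖ ^ 2 + ‖P (-w)‖ ^ 2 ≤ 1) ↔
      x₁ * x₂ * (x₁ + x₂ - 2) + x₁ + x₂ ≤ 0 := by
  set D := ((1 - x₁) * (1 - x₂)) ^ 2
  have hD : 0 < D := by
    have h₁ : 1 - x₁ ≠ 0 := sub_ne_zero.mpr hx₁.symm
    have h₂ : 1 - x₂ ≠ 0 := sub_ne_zero.mpr hx₂.symm
    positivity
  have hnorm : ∀ w, ‖P w‖ ^ 2 = ‖(w + 1) * (w - x₁) * (w - x₂)‖ ^ 2 / (4 * D) := by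
    intro w
    rw [hP]
    simp only [norm_mul, norm_div, norm_one_sub_ofReal, D, Complex.norm_two]
    field_simp
    simp only [sq_abs]
    ring
  rw [← forall_norm_eq_one_mul_im_sq_nonpos_iff]
  refine forall₂_congr fun w hw => ?_
  rw [hnorm, hnorm, ← add_div, norm_sq_cubic_add_norm_sq_cubic_neg x₁ x₂ hw,
    div_le_one (by positivity)]
  constructor <;> intro <;> linarith
end

section
/- Let a₁,…,aₙ be real numbers, let σₖ denote the k-th elementary symmetric polynomial of a₁,…,aₙ (with σ₀ = 1), and let k be an integer with 0 ≤ 2k ≤ n. Then Σ_{S ⊆ {1,…,n}, |S| = 2k} ∏_{j ∈ S}(1 − aⱼ) · ∏_{j ∉ S} aⱼ = Σ_{l=0}^{2k} (−1)^l · C(n−l, 2k−l) · σ_{n−l}. -/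
/-!
For `U ⊆ V`, expanding the product gives
`∏_{U} a · ∏_{V \ U} (1 - a) = ∑_{U ⊆ W ⊆ V} (-1)^(|W| - |U|) ∏_{W} a`.
Apply this to the complements `U = V \ S` of the `m`-sets `S` and exchange the sums:
a set `W` with `|W| = |V| - l` contains `C(|V| - l, |V| - m) = C(|V| - l, m - l)` of the
`(|V| - m)`-sets `U`, each contributing the sign `(-1)^(m - l)`.
-/

open Finset

namespace Finset

variable {ι : Type*} [DecidableEq ι]

theorem sum_powersetCard_eq_sum_powersetCard_sdiff {M : Type*} [AddCommMonoid M]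
    (f : Finset ι → M) {V : Finset ι} {m : ℕ} (hm : m ≤ #V) :
    ∑ S ∈ powersetCard m V, f S = ∑ U ∈ powersetCard (#V - m) V, f (V \ U) := by
  refine sum_nbij' (V \ ·) (V \ ·) ?_ ?_ ?_ ?_ ?_
  · intro S hS
    rw [mem_powersetCard] at hS ⊢
    exact ⟨sdiff_subset, by rw [card_sdiff_of_subset hS.1, hS.2]⟩
  · intro U hU
    rw [mem_powersetCard] at hU ⊢
    exact ⟨sdiff_subset, by rw [card_sdiff_of_subset hU.1, hU.2]; omega⟩
  · exact fun S hS => sdiff_sdiff_eq_self (mem_powersetCard.1 hS).1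
  · exact fun U hU => sdiff_sdiff_eq_self (mem_powersetCard.1 hU).1
  · exact fun S hS => by rw [sdiff_sdiff_eq_self (mem_powersetCard.1 hS).1]

theorem sum_powersetCard_sum_Icc {M : Type*} [AddCommMonoid M] (g : Finset ι → M)
    (V : Finset ι) (r : ℕ) :
    ∑ U ∈ powersetCard r V, ∑ W ∈ Icc U V, g W = ∑ W ∈ V.powerset, (#W).choose r • g W := by
  rw [sum_comm' (t' := V.powerset) (s' := powersetCard r)]
  · exact sum_congr rfl fun W _ => by rw [sum_const, card_powersetCard]
  · intro U W
    simp only [mem_powersetCard, mem_Icc, mem_powerset]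
    constructor
    · rintro ⟨⟨-, hU⟩, hUW, hWV⟩
      exact ⟨⟨hUW, hU⟩, hWV⟩
    · rintro ⟨⟨hUW, hU⟩, hWV⟩
      exact ⟨⟨hUW.trans hWV, hU⟩, hUW, hWV⟩

variable {R : Type*} [CommRing R] (a : ι → R)

theorem prod_mul_prod_sdiff_one_sub {U V : Finset ι} (h : U ⊆ V) :
    (∏ i ∈ U, a i) * ∏ i ∈ V \ U, (1 - a i)
      = ∑ W ∈ Icc U V, (-1) ^ (#W - #U) * ∏ i ∈ W, a i := by
  have hinj : Set.InjOn (U ∪ ·) ((V \ U).powerset : Set (Finset ι)) := by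
    intro t ht t' ht' htt'
    simp only [coe_powerset, Set.mem_preimage, Set.mem_powerset_iff, coe_subset] at ht ht'
    rw [← union_sdiff_cancel_left (disjoint_of_subset_right ht disjoint_sdiff),
      ← union_sdiff_cancel_left (disjoint_of_subset_right ht' disjoint_sdiff)]
    exact congrArg (· \ U) htt'
  rw [prod_sub, Icc_eq_image_powerset h, sum_image hinj, mul_sum]
  refine sum_congr rfl fun t ht => ?_
  have hdisj : Disjoint U t := disjoint_of_subset_right (mem_powerset.1 ht) disjoint_sdiff
  rw [prod_union hdisj, card_union_of_disjoint hdisj, Nat.add_sub_cancel_left, prod_const_one]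
  ring

theorem sum_powersetCard_prod_one_sub_mul_prod_sdiff {V : Finset ι} {m : ℕ} (hm : m ≤ #V) :
    ∑ S ∈ powersetCard m V, (∏ i ∈ S, (1 - a i)) * ∏ i ∈ V \ S, a i
      = ∑ l ∈ range (m + 1), (-1) ^ (m - l) * ((#V - l).choose (m - l) : R)
          * ∑ T ∈ powersetCard (#V - l) V, ∏ i ∈ T, a i := by
  calc ∑ S ∈ powersetCard m V, (∏ i ∈ S, (1 - a i)) * ∏ i ∈ V \ S, a i
      = ∑ U ∈ powersetCard (#V - m) V, (∏ i ∈ U, a i) * ∏ i ∈ V \ U, (1 - a i) := by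
        rw [sum_powersetCard_eq_sum_powersetCard_sdiff _ hm]
        refine sum_congr rfl fun U hU => ?_
        rw [sdiff_sdiff_eq_self (mem_powersetCard.1 hU).1, mul_comm]
    _ = ∑ U ∈ powersetCard (#V - m) V, ∑ W ∈ Icc U V, (-1) ^ (#W - (#V - m)) * ∏ i ∈ W, a i := by
        refine sum_congr rfl fun U hU => ?_
        rw [prod_mul_prod_sdiff_one_sub a (mem_powersetCard.1 hU).1, (mem_powersetCard.1 hU).2]
    _ = ∑ l ∈ range (#V + 1), ∑ W ∈ powersetCard (#V - l) V,
          (#V - l).choose (#V - m) • ((-1) ^ ((#V - l) - (#V - m)) * ∏ i ∈ W, a i) := by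
        rw [sum_powersetCard_sum_Icc, sum_powerset, ← sum_range_reflect]
        refine sum_congr rfl fun l _ => sum_congr rfl fun W hW => ?_
        rw [(mem_powersetCard.1 hW).2]
    _ = ∑ l ∈ range (m + 1), ∑ W ∈ powersetCard (#V - l) V,
          (#V - l).choose (#V - m) • ((-1) ^ ((#V - l) - (#V - m)) * ∏ i ∈ W, a i) := by
        refine (sum_subset (range_subset_range.2 (by omega)) fun l hlV hl => ?_).symm
        rw [mem_range] at hlV hl
        simp [Nat.choose_eq_zero_of_lt (show #V - l < #V - m by omega)]
    _ = _ := by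
        refine sum_congr rfl fun l hl => ?_
        rw [mem_range] at hl
        rw [Nat.choose_symm_of_eq_add (show #V - l = (#V - m) + (m - l) by omega),
          show #V - l - (#V - m) = m - l by omega, mul_sum]
        simp only [nsmul_eq_mul]
        exact sum_congr rfl fun _ _ => by ring

end Finset

theorem stmt_10 (n : ℕ) (a : Fin n → ℝ)
    (σ : ℕ → ℝ)
    (hσ : ∀ k, σ k = ∑ S ∈ Finset.powersetCard k (Finset.univ : Finset (Fin n)),
      ∏ i ∈ S, a i)
    (k : ℕ) (hk : 2 * k ≤ n) :
    (∑ S ∈ Finset.powersetCard (2 * k) (Finset.univ : Finset (Fin n)),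
        (∏ j ∈ S, (1 - a j)) * ∏ j ∈ Finset.univ \ S, a j)
      = ∑ l ∈ Finset.range (2 * k + 1),
          (-1 : ℝ) ^ l * ((n - l).choose (2 * k - l) : ℝ) * σ (n - l) := by
  have hcard : #(univ : Finset (Fin n)) = n := card_fin n
  rw [sum_powersetCard_prod_one_sub_mul_prod_sdiff a (hcard.symm ▸ hk), hcard]
  refine sum_congr rfl fun l hl => ?_
  rw [hσ, neg_one_pow_eq_pow_mod_two, neg_one_pow_eq_pow_mod_two (n := l),
    show (2 * k - l) % 2 = l % 2 by rw [mem_range] at hl; omega]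
end

section
/- Let n ≥ 1 and let z₁,…,zₙ be real numbers, all ≠ 1, and set aᵢ = 1 + 2zᵢ/(zᵢ−1)². If 0 ≤ aᵢ ≤ 1 for every i, then T(φ) ≤ T(0) for every real φ. -/
/-!
For real `z ≠ 1` one has `ψ_z(±e^{iφ}) = a ± (1 - a) cos φ` with `a = 1 + 2z/(z-1)²`, so
`T(φ) = f(cos φ) + f(-cos φ)` for `f(x) = ∏ᵢ (aᵢ + (1 - aᵢ) x)`. When `0 ≤ aᵢ ≤ 1` the polynomial
`f` has nonnegative coefficients, so its even part `f(x) + f(-x)` is a polynomial in `x²` with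
nonnegative coefficients and is largest on `[-1, 1]` at `x = ±1`, i.e. at `φ = 0`.
-/

open Finset

lemma Finset.prod_add_mul_eq_sum_powerset {ι R : Type*} [DecidableEq ι] [CommSemiring R]
    (s : Finset ι) (a b : ι → R) (c : R) :
    ∏ i ∈ s, (a i + b i * c) =
      ∑ t ∈ s.powerset, (∏ i ∈ t, b i) * (∏ i ∈ s \ t, a i) * c ^ #t := by
  simp_rw [add_comm (a _), prod_add]
  refine sum_congr rfl fun t _ => ?_
  rw [prod_mul_distrib, prod_const]
  ring

section ProductBound

variable {R : Type*} [CommRing R] [LinearOrder R] [IsStrictOrderedRing R]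

lemma pow_add_neg_pow_le {c : R} (hc : |c| ≤ 1) (k : ℕ) :
    c ^ k + (-c) ^ k ≤ 1 + (-1) ^ k := by
  rcases Nat.even_or_odd k with hk | hk
  · have : c ^ k ≤ 1 := by
      rw [← hk.pow_abs]
      exact pow_le_one₀ (abs_nonneg c) hc
    rw [hk.neg_pow, hk.neg_one_pow]
    linarith
  · rw [hk.neg_pow, hk.neg_one_pow]
    simp

lemma Finset.prod_add_mul_add_prod_sub_mul_le {ι : Type*} (s : Finset ι) {a b : ι → R}
    (ha : ∀ i ∈ s, 0 ≤ a i) (hb : ∀ i ∈ s, 0 ≤ b i) {c : R} (hc : |c| ≤ 1) :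
    ∏ i ∈ s, (a i + b i * c) + ∏ i ∈ s, (a i - b i * c) ≤
      ∏ i ∈ s, (a i + b i) + ∏ i ∈ s, (a i - b i) := by
  classical
  have expand : ∀ x : R, ∏ i ∈ s, (a i + b i * x) + ∏ i ∈ s, (a i + b i * -x) =
      ∑ t ∈ s.powerset, (∏ i ∈ t, b i) * (∏ i ∈ s \ t, a i) * (x ^ #t + (-x) ^ #t) := by
    intro x
    simp_rw [prod_add_mul_eq_sum_powerset, ← sum_add_distrib, mul_add]
  have h1 := expand 1
  simp only [mul_one, mul_neg, one_pow] at h1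
  simp only [mul_neg] at expand
  simp_rw [← sub_eq_add_neg] at expand h1
  rw [expand, h1]
  refine sum_le_sum fun t ht => mul_le_mul_of_nonneg_left (pow_add_neg_pow_le hc _) ?_
  have hts : t ⊆ s := mem_powerset.mp ht
  exact mul_nonneg (prod_nonneg fun i hi => hb i (hts hi))
    (prod_nonneg fun i hi => ha i (sdiff_subset hi))

end ProductBound

lemma psi_ofReal_exp_mul_I {z a : ℝ} (hz : z ≠ 1) (ha : a = 1 + 2 * z / (z - 1) ^ 2) (φ : ℝ) :
    psi z (Complex.exp (φ * Complex.I)) = a + (1 - a) * Real.cos φ := by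
  have hz' : (z - 1) ^ 2 ≠ 0 := pow_ne_zero _ (sub_ne_zero.mpr hz)
  simp only [psi, Complex.sq_norm, Complex.normSq_apply, Complex.sub_re, Complex.sub_im,
    Complex.exp_ofReal_mul_I_re, Complex.exp_ofReal_mul_I_im, Complex.one_re, Complex.one_im,
    Complex.ofReal_re, Complex.ofReal_im, ha]
  field_simp
  linear_combination (z - 1) ^ 2 * Real.sin_sq_add_cos_sq φ

lemma psi_ofReal_neg_exp_mul_I {z a : ℝ} (hz : z ≠ 1) (ha : a = 1 + 2 * z / (z - 1) ^ 2)
    (φ : ℝ) : psi z (-Complex.exp (φ * Complex.I)) = a - (1 - a) * Real.cos φ := by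
  have h : -Complex.exp (φ * Complex.I) = Complex.exp ((φ + Real.pi : ℝ) * Complex.I) := by
    rw [Complex.ofReal_add, add_mul, Complex.exp_add, Complex.exp_pi_mul_I, mul_neg_one]
  rw [h, psi_ofReal_exp_mul_I hz ha, Real.cos_add_pi]
  ring

theorem stmt_15_general (n : ℕ) (z : Fin n → ℝ) (hz : ∀ i, z i ≠ 1)
    (a : Fin n → ℝ) (ha : ∀ i, a i = 1 + 2 * z i / (z i - 1) ^ 2)
    (haa : ∀ i, 0 ≤ a i ∧ a i ≤ 1) :
    ∀ φ : ℝ, T z φ ≤ T z 0 := by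
  have hT : ∀ θ : ℝ, T z θ = ∏ i, (a i + (1 - a i) * Real.cos θ) +
      ∏ i, (a i - (1 - a i) * Real.cos θ) := fun θ => by
    simp only [T, psi_ofReal_exp_mul_I (hz _) (ha _), psi_ofReal_neg_exp_mul_I (hz _) (ha _)]
  intro φ
  rw [hT, hT, Real.cos_zero]
  simp only [mul_one]
  exact prod_add_mul_add_prod_sub_mul_le univ (fun i _ => (haa i).1)
    (fun i _ => sub_nonneg.mpr (haa i).2) (Real.abs_cos_le_one φ)

theorem stmt_15 (n : ℕ) (hn : 1 ≤ n) (z : Fin n → ℝ) (hz : ∀ i, z i ≠ 1)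
    (a : Fin n → ℝ) (ha : ∀ i, a i = 1 + 2 * z i / (z i - 1) ^ 2)
    (haa : ∀ i, 0 ≤ a i ∧ a i ≤ 1) :
    ∀ φ : ℝ, T z φ ≤ T z 0 :=
  stmt_15_general n z hz a ha haa
end
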